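/- arXiv:1508.02473 — 6 statements merged into one kernel-verified Lean document; each statement's English description precedes it below -/
import Mathlib

section
/- (Levinson–Durbin update used for the gain of goodness of fit.) Let M ≥ 1 and γ_0, γ_1, …, γ_M ∈ ℝ be such that for every 1 ≤ L ≤ M the L×L symmetric Toeplitz matrix Γ_L with (i,j) entry γ_{|i−j|} is positive definite. Set e_0 = γ_0 and, for 1 ≤ L ≤ M, let g_L = (γ_1, …, γ_L)ᵀ, Ψ_L = −Γ_L^{-1} g_L ∈ ℝ^L with last coordinate ψ_{L,L}, and e_L = γ_0 − g_Lᵀ Γ_L^{-1} g_L. Then for every 1 ≤ L ≤ M, e_L = (1 − ψ_{L,L}²) e_{L−1}; in particular e_{L−1}/e_L = 1/(1 − ψ_{L,L}²) whenever e_L ≠ 0. -/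
/-!
`Γ_{L+1}` has `Γ_L` as its leading block and `J g_L` (with `J` the reversal) as its last column,
and it is persymmetric, so `J Ψ_L` solves the backward normal equations:
`Γ_{L+1} (J Ψ_L, 1) = (0, e_L)`. Hence `e_L = yᵀ Γ_{L+1} y > 0` for `y = (J Ψ_L, 1)`, and
`Ψ_{L+1} = (Ψ_L + κ J Ψ_L, κ)` where the reflection coefficient `κ` is fixed by the last normal
equation, `κ e_L = -(γ_{L+1} + (J g_L)ᵀ Ψ_L)`. Substituting into `e_{L+1} = γ_0 + g_{L+1}ᵀ Ψ_{L+1}`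
gives `e_{L+1} = e_L + κ (γ_{L+1} + (J g_L)ᵀ Ψ_L) = (1 - κ²) e_L`, and `κ = ψ_{L+1,L+1}`.
-/

open Matrix

/-- The order-`L` autocovariance (symmetric Toeplitz) matrix `Γ_L` with `(i,j)` entry
`γ_{|i-j|}`, built from the autocovariances `γ`. -/
def toeplitzCov (γ : ℕ → ℝ) (L : ℕ) : Matrix (Fin L) (Fin L) ℝ :=
  fun i j => γ (((i : ℤ) - (j : ℤ)).natAbs)

/-- The autocovariance vector `g_L = (γ_1, …, γ_L)ᵀ`. -/
def covVec (γ : ℕ → ℝ) (L : ℕ) : Fin L → ℝ := fun i => γ ((i : ℕ) + 1)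

/-- The best linear prediction coefficient vector `Ψ_L = -Γ_L⁻¹ g_L`. -/
noncomputable def bestPredictor (γ : ℕ → ℝ) (L : ℕ) : Fin L → ℝ :=
  -((toeplitzCov γ L)⁻¹ *ᵥ covVec γ L)

/-- The last coordinate `ψ_{L,L}` of `Ψ_L` (the partial autocorrelation), for `L ≥ 1`;
junk value `0` for `L = 0`. -/
noncomputable def psiLL (γ : ℕ → ℝ) (L : ℕ) : ℝ :=
  if h : 0 < L then bestPredictor γ L ⟨L - 1, by omega⟩ else 0

/-- The minimal one-step prediction error `e_L = γ_0 - g_Lᵀ Γ_L⁻¹ g_L` of the order-`L`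
linear predictor, with `e_0 = γ_0`. -/
noncomputable def predError (γ : ℕ → ℝ) (L : ℕ) : ℝ :=
  γ 0 - covVec γ L ⬝ᵥ ((toeplitzCov γ L)⁻¹ *ᵥ covVec γ L)


theorem Matrix.snoc_dotProduct_snoc {α : Type*} [NonUnitalNonAssocSemiring α] {n : ℕ}
    (u v : Fin n → α) (a b : α) : Fin.snoc u a ⬝ᵥ Fin.snoc v b = u ⬝ᵥ v + a * b := by
  simp [dotProduct, Fin.sum_univ_castSucc]

theorem Matrix.dotProduct_comp_rev {α : Type*} [NonUnitalNonAssocSemiring α] {n : ℕ}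
    (u v : Fin n → α) : u ⬝ᵥ (v ∘ Fin.rev) = (u ∘ Fin.rev) ⬝ᵥ v :=
  dotProduct_comp_equiv_symm u v Fin.revPerm

section Toeplitz

variable (γ : ℕ → ℝ) {L : ℕ}

theorem toeplitzCov_submatrix_rev :
    (toeplitzCov γ L).submatrix Fin.rev Fin.rev = toeplitzCov γ L := by
  ext i j
  simp only [submatrix_apply, toeplitzCov, Fin.val_rev]
  congr 1
  omega

theorem toeplitzCov_mulVec_comp_rev (v : Fin L → ℝ) :
    toeplitzCov γ L *ᵥ (v ∘ Fin.rev) = (toeplitzCov γ L *ᵥ v) ∘ Fin.rev := by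
  have h := submatrix_mulVec_equiv (toeplitzCov γ L) v Fin.rev Fin.revPerm
  rw [Fin.revPerm_symm, show ⇑(@Fin.revPerm L) = Fin.rev from rfl,
    toeplitzCov_submatrix_rev] at h
  rw [h]
  ext i
  simp

theorem covVec_succ : covVec γ (L + 1) = Fin.snoc (covVec γ L) (γ (L + 1)) := by
  ext i
  refine Fin.lastCases ?_ (fun i => ?_) i <;> simp [covVec]

theorem toeplitzCov_submatrix_castSucc :
    (toeplitzCov γ (L + 1)).submatrix Fin.castSucc Fin.castSucc = toeplitzCov γ L := rfl

theorem toeplitzCov_succ_castSucc_castSucc (i j : Fin L) :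
    toeplitzCov γ (L + 1) i.castSucc j.castSucc = toeplitzCov γ L i j := rfl

theorem toeplitzCov_succ_last_last : toeplitzCov γ (L + 1) (Fin.last L) (Fin.last L) = γ 0 := by
  simp [toeplitzCov]

theorem toeplitzCov_succ_castSucc_last (i : Fin L) :
    toeplitzCov γ (L + 1) i.castSucc (Fin.last L) = covVec γ L i.rev := by
  simp only [toeplitzCov, covVec, Fin.val_castSucc, Fin.val_last, Fin.val_rev]
  congr 1
  omega

theorem toeplitzCov_succ_last_castSucc (i : Fin L) :
    toeplitzCov γ (L + 1) (Fin.last L) i.castSucc = covVec γ L i.rev := by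
  simp only [toeplitzCov, covVec, Fin.val_castSucc, Fin.val_last, Fin.val_rev]
  congr 1
  omega

theorem toeplitzCov_succ_mulVec_snoc (v : Fin L → ℝ) (c : ℝ) :
    toeplitzCov γ (L + 1) *ᵥ Fin.snoc v c =
      Fin.snoc (toeplitzCov γ L *ᵥ v + c • (covVec γ L ∘ Fin.rev))
        ((covVec γ L ∘ Fin.rev) ⬝ᵥ v + c * γ 0) := by
  ext i
  refine Fin.lastCases ?_ (fun i => ?_) i
  · simp only [mulVec, dotProduct, Fin.sum_univ_castSucc, Fin.snoc_castSucc, Fin.snoc_last,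
      toeplitzCov_succ_last_castSucc, toeplitzCov_succ_last_last, Function.comp_apply, mul_comm]
  · simp only [mulVec, dotProduct, Fin.sum_univ_castSucc, Fin.snoc_castSucc, Fin.snoc_last,
      toeplitzCov_succ_castSucc_castSucc, toeplitzCov_succ_castSucc_last, Pi.add_apply,
      Pi.smul_apply, Function.comp_apply, smul_eq_mul, mul_comm]

end Toeplitz

section Predictor

variable {γ : ℕ → ℝ} {L : ℕ}

theorem toeplitzCov_mulVec_bestPredictor (h : IsUnit (toeplitzCov γ L).det) :
    toeplitzCov γ L *ᵥ bestPredictor γ L = -covVec γ L := by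
  rw [bestPredictor, mulVec_neg, mulVec_mulVec, mul_nonsing_inv _ h, one_mulVec]

theorem bestPredictor_eq_of_mulVec (h : IsUnit (toeplitzCov γ L).det) {x : Fin L → ℝ}
    (hx : toeplitzCov γ L *ᵥ x = -covVec γ L) : bestPredictor γ L = x :=
  mulVec_injective_iff_isUnit.2 ((isUnit_iff_isUnit_det _).2 h) <| by
    rw [toeplitzCov_mulVec_bestPredictor h, hx]

variable (γ L) in
theorem predError_eq_add_dotProduct : predError γ L = γ 0 + covVec γ L ⬝ᵥ bestPredictor γ L := by
  rw [predError, bestPredictor, dotProduct_neg, sub_eq_add_neg]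

theorem psiLL_succ : psiLL γ (L + 1) = bestPredictor γ (L + 1) (Fin.last L) := rfl

theorem toeplitzCov_succ_mulVec_backward (h : IsUnit (toeplitzCov γ L).det) :
    toeplitzCov γ (L + 1) *ᵥ Fin.snoc (bestPredictor γ L ∘ Fin.rev) 1 =
      Fin.snoc 0 (predError γ L) := by
  rw [toeplitzCov_succ_mulVec_snoc, toeplitzCov_mulVec_comp_rev,
    toeplitzCov_mulVec_bestPredictor h, Pi.neg_comp, one_smul, neg_add_cancel,
    dotProduct_comp_rev, Function.comp_assoc, Fin.rev_involutive.comp_self, Function.comp_id,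
    one_mul, predError_eq_add_dotProduct, add_comm (γ 0)]

theorem toeplitzCov_posDef_of_succ (h : (toeplitzCov γ (L + 1)).PosDef) :
    (toeplitzCov γ L).PosDef := by
  rw [← toeplitzCov_submatrix_castSucc]
  exact h.submatrix (Fin.castSucc_injective L)

theorem predError_pos (h : (toeplitzCov γ (L + 1)).PosDef) : 0 < predError γ L := by
  have hL := (toeplitzCov_posDef_of_succ h).det_pos.ne'.isUnit
  have hy : (Fin.snoc (bestPredictor γ L ∘ Fin.rev) 1 : Fin (L + 1) → ℝ) ≠ 0 := fun h0 => by
    simpa using congrFun h0 (Fin.last L)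
  simpa [toeplitzCov_succ_mulVec_backward hL, snoc_dotProduct_snoc] using
    h.dotProduct_mulVec_pos hy

variable (γ L) in
/-- Chosen so that `(Ψ_L + κ J Ψ_L, κ)` also satisfies the last of the order-`L + 1` normal
equations. -/
noncomputable def reflectionCoeff : ℝ :=
  -(γ (L + 1) + (covVec γ L ∘ Fin.rev) ⬝ᵥ bestPredictor γ L) / predError γ L

theorem reflectionCoeff_mul_predError (h : (toeplitzCov γ (L + 1)).PosDef) :
    reflectionCoeff γ L * predError γ L =
      -(γ (L + 1) + (covVec γ L ∘ Fin.rev) ⬝ᵥ bestPredictor γ L) :=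
  div_mul_cancel₀ _ (predError_pos h).ne'

theorem bestPredictor_succ (h : (toeplitzCov γ (L + 1)).PosDef) :
    bestPredictor γ (L + 1) =
      Fin.snoc (bestPredictor γ L + reflectionCoeff γ L • (bestPredictor γ L ∘ Fin.rev))
        (reflectionCoeff γ L) := by
  have hL := (toeplitzCov_posDef_of_succ h).det_pos.ne'.isUnit
  apply bestPredictor_eq_of_mulVec h.det_pos.ne'.isUnit
  rw [toeplitzCov_succ_mulVec_snoc, mulVec_add, mulVec_smul, toeplitzCov_mulVec_comp_rev,
    toeplitzCov_mulVec_bestPredictor hL, Pi.neg_comp, smul_neg, neg_add_cancel_right,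
    dotProduct_add, dotProduct_smul, dotProduct_comp_rev, Function.comp_assoc,
    Fin.rev_involutive.comp_self, Function.comp_id, covVec_succ]
  ext i
  refine Fin.lastCases ?_ (fun i => ?_) i
  · simp only [Fin.snoc_last, Pi.neg_apply]
    linear_combination reflectionCoeff_mul_predError h - reflectionCoeff γ L * predError_eq_add_dotProduct γ L
  · simp

theorem psiLL_succ_eq_reflectionCoeff (h : (toeplitzCov γ (L + 1)).PosDef) :
    psiLL γ (L + 1) = reflectionCoeff γ L := by
  rw [psiLL_succ, bestPredictor_succ h, Fin.snoc_last]

theorem predError_succ (h : (toeplitzCov γ (L + 1)).PosDef) :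
    predError γ (L + 1) = (1 - reflectionCoeff γ L ^ 2) * predError γ L := by
  rw [predError_eq_add_dotProduct, bestPredictor_succ h, covVec_succ, snoc_dotProduct_snoc,
    dotProduct_add, dotProduct_smul, dotProduct_comp_rev, smul_eq_mul]
  linear_combination reflectionCoeff γ L * reflectionCoeff_mul_predError h - predError_eq_add_dotProduct γ L

end Predictor

theorem predError_levinson_durbin_update_general (M : ℕ) (γ : ℕ → ℝ)
    (hpd : ∀ L, 1 ≤ L → L ≤ M → (toeplitzCov γ L).PosDef) :
    ∀ L, 1 ≤ L → L ≤ M →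
      predError γ L = (1 - psiLL γ L ^ 2) * predError γ (L - 1) ∧
        (predError γ L ≠ 0 →
          predError γ (L - 1) / predError γ L = 1 / (1 - psiLL γ L ^ 2)) := by
  intro L hL hLM
  obtain ⟨n, rfl⟩ : ∃ n, L = n + 1 := ⟨L - 1, by omega⟩
  have h := hpd (n + 1) hL hLM
  have hstep : predError γ (n + 1) = (1 - psiLL γ (n + 1) ^ 2) * predError γ n := by
    rw [psiLL_succ_eq_reflectionCoeff h, predError_succ h]
  refine ⟨hstep, fun _ => ?_⟩
  rw [Nat.add_sub_cancel, hstep, div_mul_cancel_right₀ (predError_pos h).ne', one_div]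

/-- Levinson–Durbin update for the gain of goodness of fit.
If `Γ_L` is positive definite for every `1 ≤ L ≤ M`, then for every `1 ≤ L ≤ M` one has
`e_L = (1 - ψ_{L,L}²) e_{L-1}`; in particular `e_{L-1}/e_L = 1/(1 - ψ_{L,L}²)` whenever
`e_L ≠ 0`. (Note `e_0 = γ_0 - (empty dot product) = γ_0`.) -/
theorem predError_levinson_durbin_update (M : ℕ) (hM : 1 ≤ M) (γ : ℕ → ℝ)
    (hpd : ∀ L, 1 ≤ L → L ≤ M → (toeplitzCov γ L).PosDef) :
    ∀ L, 1 ≤ L → L ≤ M →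
      predError γ L = (1 - psiLL γ L ^ 2) * predError γ (L - 1) ∧
        (predError γ L ≠ 0 →
          predError γ (L - 1) / predError γ L = 1 / (1 - psiLL γ L ^ 2)) :=
  predError_levinson_durbin_update_general M γ hpd
end

section
/- (Remark 4, algebraic decay: C_N has a well-separated mode.) Fix constants γ > 0, c > 0 and σ > 0, and for each integer N ≥ 1 define C_N(L) = L σ²/N + c L^{−γ} for positive integers L. For each N let L_0^{(N)} be a minimizer of C_N over the positive integers (a minimizer exists). If (L_N) is any sequence of positive integers with lim_{N→∞} C_N(L_N)/C_N(L_0^{(N)}) = 1, then lim_{N→∞} L_N / L_0^{(N)} = 1. -/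
/-!
Put `u_N = (cγN/σ²)^{1/(1+γ)}`, the minimizer of `C_N` over the positive reals. Then
`C_N(L) = c u_N^{-γ} φ(L/u_N)` with `φ(r) = γ r + r^{-γ}`, which decreases strictly on `(0, 1]` and
increases strictly on `[1, ∞)`. Comparing with the competitor `⌈u_N⌉` gives
`φ(L_0^{(N)}/u_N) ≤ φ(⌈u_N⌉/u_N) → φ(1)` and
`φ(L_N/u_N) ≤ (C_N(L_N)/C_N(L_0^{(N)})) φ(⌈u_N⌉/u_N) → φ(1)`. As the minimum of `φ` at `1` is
strict on both sides, `L_0^{(N)}/u_N → 1` and `L_N/u_N → 1`, so their quotient tends to `1`.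
-/

open Filter Set Topology

theorem tendsto_of_apply_le_of_strictAntiOn_of_strictMonoOn {α β ι : Type*}
    [LinearOrder α] [TopologicalSpace α] [OrderTopology α]
    [LinearOrder β] [TopologicalSpace β] [OrderTopology β]
    {l : Filter ι} {f : α → β} {m x₀ : α} {r : ι → α} {b : ι → β}
    (hanti : StrictAntiOn f (Ioc m x₀)) (hmono : StrictMonoOn f (Ici x₀))
    (hr : ∀ᶠ i in l, m < r i) (hle : ∀ᶠ i in l, f (r i) ≤ b i)
    (hb : Tendsto b l (𝓝 (f x₀))) : Tendsto r l (𝓝 x₀) := by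
  refine tendsto_order.2 ⟨fun a ha => ?_, fun a ha => ?_⟩
  · rcases le_or_gt a m with ham | hma
    · exact hr.mono fun i hi => ham.trans_lt hi
    have hfa : f x₀ < f a := hanti ⟨hma, ha.le⟩ ⟨hma.trans ha, le_rfl⟩ ha
    filter_upwards [hr, hle, hb.eventually_lt_const hfa] with i hri hlei hbi
    by_contra! hia
    exact (hanti.antitoneOn ⟨hri, hia.trans ha.le⟩ ⟨hma, ha.le⟩ hia).not_gt (hlei.trans_lt hbi)
  · have hfa : f x₀ < f a := hmono (mem_Ici.2 le_rfl) (mem_Ici.2 ha.le) ha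
    filter_upwards [hle, hb.eventually_lt_const hfa] with i hlei hbi
    by_contra! hia
    exact (hmono.monotoneOn (mem_Ici.2 ha.le) (mem_Ici.2 (ha.le.trans hia)) hia).not_gt
      (hlei.trans_lt hbi)

noncomputable def normalizedCost (γ r : ℝ) : ℝ := γ * r + r ^ (-γ)

lemma normalizedCost_pos {γ r : ℝ} (hγ : 0 ≤ γ) (hr : 0 < r) : 0 < normalizedCost γ r := by
  unfold normalizedCost; positivity

lemma continuousOn_normalizedCost (γ : ℝ) : ContinuousOn (normalizedCost γ) (Ioi 0) :=
  (continuousOn_const.mul continuousOn_id).add fun x hx =>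
    (Real.continuousAt_rpow_const x (-γ) (Or.inl (ne_of_gt hx))).continuousWithinAt

lemma hasDerivAt_normalizedCost (γ : ℝ) {x : ℝ} (hx : 0 < x) :
    HasDerivAt (normalizedCost γ) (γ * (1 - x ^ (-γ - 1))) x :=
  (((hasDerivAt_id x).const_mul γ).add
    (Real.hasDerivAt_rpow_const (p := -γ) (Or.inl hx.ne'))).congr_deriv (by ring)

lemma strictMonoOn_normalizedCost {γ : ℝ} (hγ : 0 < γ) :
    StrictMonoOn (normalizedCost γ) (Ici 1) := by
  refine strictMonoOn_of_deriv_pos (convex_Ici 1)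
    ((continuousOn_normalizedCost γ).mono fun x (hx : 1 ≤ x) => zero_lt_one.trans_le hx)
    fun x hx => ?_
  rw [interior_Ici, mem_Ioi] at hx
  rw [(hasDerivAt_normalizedCost γ (zero_lt_one.trans hx)).deriv]
  exact mul_pos hγ (sub_pos.2 (Real.rpow_lt_one_of_one_lt_of_neg hx (by linarith)))

lemma strictAntiOn_normalizedCost {γ : ℝ} (hγ : 0 < γ) :
    StrictAntiOn (normalizedCost γ) (Ioc 0 1) := by
  refine strictAntiOn_of_deriv_neg (convex_Ioc 0 1)
    ((continuousOn_normalizedCost γ).mono fun x hx => hx.1) fun x hx => ?_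
  rw [interior_Ioc] at hx
  rw [(hasDerivAt_normalizedCost γ hx.1).deriv]
  exact mul_neg_of_pos_of_neg hγ
    (sub_neg.2 (Real.one_lt_rpow_of_pos_of_lt_one_of_neg hx.1 hx.2 (by linarith)))

noncomputable def mismatchCost (γ c σ : ℝ) (N : ℕ) (L : ℝ) : ℝ := L * σ ^ 2 / N + c * L ^ (-γ)

/-- The minimizer of `mismatchCost γ c σ N` over the positive reals. -/
noncomputable def optimalScale (γ c σ : ℝ) (N : ℕ) : ℝ := (c * γ * N / σ ^ 2) ^ (1 / (1 + γ))

section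
variable {γ c σ : ℝ} (hγ : 0 < γ) (hc : 0 < c) (hσ : σ ≠ 0)
include hγ hc hσ

lemma optimalScale_pos {N : ℕ} (hN : 0 < N) : 0 < optimalScale γ c σ N := by
  unfold optimalScale; positivity

lemma tendsto_optimalScale_atTop : Tendsto (optimalScale γ c σ) atTop atTop :=
  (tendsto_rpow_atTop (by positivity)).comp <|
    (tendsto_natCast_atTop_atTop.const_mul_atTop (by positivity)).atTop_div_const (by positivity)

lemma mismatchCost_eq_mul_normalizedCost {N : ℕ} (hN : 0 < N) {L : ℝ} (hL : 0 ≤ L) :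
    mismatchCost γ c σ N L =
      c * optimalScale γ c σ N ^ (-γ) * normalizedCost γ (L / optimalScale γ c σ N) := by
  set u := optimalScale γ c σ N
  have hu : 0 < u := optimalScale_pos hγ hc hσ hN
  have hpow : u * u ^ γ = c * γ * N / σ ^ 2 := by
    rw [← Real.rpow_one_add' hu.le (by positivity)]
    simp only [u, optimalScale]
    rw [← Real.rpow_mul (by positivity), one_div_mul_cancel (by positivity), Real.rpow_one]
  have hs : σ ^ 2 / N = c * γ / (u * u ^ γ) := by
    rw [hpow]; field_simp
  rw [mismatchCost, normalizedCost, mul_div_assoc, hs, Real.div_rpow hL hu.le,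
    Real.rpow_neg hu.le, Real.rpow_neg hL]
  field_simp

lemma normalizedCost_le_of_mismatchCost_le {N : ℕ} (hN : 0 < N) {L L' : ℝ} (hL : 0 ≤ L)
    (hL' : 0 ≤ L') (h : mismatchCost γ c σ N L ≤ mismatchCost γ c σ N L') :
    normalizedCost γ (L / optimalScale γ c σ N) ≤
      normalizedCost γ (L' / optimalScale γ c σ N) := by
  have hk : 0 < c * optimalScale γ c σ N ^ (-γ) := by
    have := optimalScale_pos hγ hc hσ hN; positivity
  rwa [mismatchCost_eq_mul_normalizedCost hγ hc hσ hN hL,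
    mismatchCost_eq_mul_normalizedCost hγ hc hσ hN hL', mul_le_mul_iff_right₀ hk] at h

lemma normalizedCost_le_ratio_mul {N : ℕ} (hN : 0 < N) {L₀ L₁ L : ℝ} (hL₀ : 0 < L₀)
    (hL₁ : 0 < L₁) (hL : 0 ≤ L) (h : mismatchCost γ c σ N L₀ ≤ mismatchCost γ c σ N L) :
    normalizedCost γ (L₁ / optimalScale γ c σ N) ≤
      mismatchCost γ c σ N L₁ / mismatchCost γ c σ N L₀ *
        normalizedCost γ (L / optimalScale γ c σ N) := by
  have hu := optimalScale_pos hγ hc hσ hN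
  have hk : 0 < c * optimalScale γ c σ N ^ (-γ) := by positivity
  have hφ₀ := normalizedCost_pos hγ.le (div_pos hL₀ hu)
  have hφ₁ := normalizedCost_pos hγ.le (div_pos hL₁ hu)
  have hle := normalizedCost_le_of_mismatchCost_le hγ hc hσ hN hL₀.le hL h
  rw [mismatchCost_eq_mul_normalizedCost hγ hc hσ hN hL₀.le,
    mismatchCost_eq_mul_normalizedCost hγ hc hσ hN hL₁.le, mul_div_mul_left _ _ hk.ne',
    div_mul_eq_mul_div, le_div_iff₀ hφ₀]
  gcongr

end

/-- Remark 4, algebraic decay: `C_N` has a well-separated mode.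
With `C_N(L) = L σ²/N + c L^{-γ}`, if `L_0^{(N)}` minimizes `C_N` over the positive
integers and `(L_N)` is a sequence of positive integers with
`C_N(L_N)/C_N(L_0^{(N)}) → 1`, then `L_N / L_0^{(N)} → 1`. -/
theorem wellSeparatedMode_algebraic (γ c σ : ℝ) (hγ : 0 < γ) (hc : 0 < c) (hσ : 0 < σ)
    (C : ℕ → ℕ → ℝ)
    (hC : ∀ N L : ℕ, C N L = (L : ℝ) * σ ^ 2 / (N : ℝ) + c * (L : ℝ) ^ (-γ))
    (L0 : ℕ → ℕ)
    (hL0 : ∀ N ≥ 1, 1 ≤ L0 N ∧ ∀ L ≥ 1, C N (L0 N) ≤ C N L)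
    (LN : ℕ → ℕ) (hLN : ∀ N, 1 ≤ LN N)
    (hlim : Tendsto (fun N => C N (LN N) / C N (L0 N)) atTop (nhds 1)) :
    Tendsto (fun N => (LN N : ℝ) / (L0 N : ℝ)) atTop (nhds 1) := by
  set u := optimalScale γ c σ
  have hu : ∀ N ≥ 1, 0 < u N := fun N hN => optimalScale_pos hγ hc hσ.ne' hN
  have hmin : ∀ N ≥ 1, mismatchCost γ c σ N (L0 N) ≤ mismatchCost γ c σ N ⌈u N⌉₊ := fun N hN =>
    by simpa only [hC, mismatchCost] using (hL0 N hN).2 _ (Nat.one_le_ceil_iff.2 (hu N hN))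
  have hceil :
      Tendsto (fun N => normalizedCost γ (⌈u N⌉₊ / u N)) atTop (𝓝 (normalizedCost γ 1)) :=
    ((continuousOn_normalizedCost γ).continuousAt (Ioi_mem_nhds one_pos)).tendsto.comp
      (tendsto_nat_ceil_div_atTop.comp (tendsto_optimalScale_atTop hγ hc hσ.ne'))
  have hL0u : Tendsto (fun N => (L0 N : ℝ) / u N) atTop (𝓝 1) := by
    refine tendsto_of_apply_le_of_strictAntiOn_of_strictMonoOn (strictAntiOn_normalizedCost hγ)
      (strictMonoOn_normalizedCost hγ) ?_ ?_ hceil <;>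
      filter_upwards [eventually_ge_atTop 1] with N hN
    · exact div_pos (by exact_mod_cast (hL0 N hN).1) (hu N hN)
    · exact normalizedCost_le_of_mismatchCost_le hγ hc hσ.ne' hN (by positivity) (by positivity)
        (hmin N hN)
  have hLNu : Tendsto (fun N => (LN N : ℝ) / u N) atTop (𝓝 1) := by
    refine tendsto_of_apply_le_of_strictAntiOn_of_strictMonoOn (strictAntiOn_normalizedCost hγ)
      (strictMonoOn_normalizedCost hγ) ?_ ?_
      (by simpa only [hC, mismatchCost, one_mul] using hlim.mul hceil) <;>
      filter_upwards [eventually_ge_atTop 1] with N hN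
    · exact div_pos (by exact_mod_cast hLN N) (hu N hN)
    · exact normalizedCost_le_ratio_mul hγ hc hσ.ne' hN (by exact_mod_cast (hL0 N hN).1)
        (by exact_mod_cast hLN N) (by positivity) (hmin N hN)
  rw [← div_one (1 : ℝ)]
  exact (hLNu.div hL0u one_ne_zero).congr' <| (eventually_ge_atTop 1).mono fun N hN =>
    div_div_div_cancel_right₀ (hu N hN).ne' _ _
end

section
/- (Remark 4, exponential decay: C_N has a well-separated mode.) Fix constants γ > 0, c > 0 and σ > 0, and for each integer N ≥ 1 define C_N(L) = L σ²/N + c e^{−γL} for positive integers L. For each N let L_0^{(N)} be a minimizer of C_N over the positive integers (a minimizer exists). If (L_N) is any sequence of positive integers with lim_{N→∞} C_N(L_N)/C_N(L_0^{(N)}) = 1, then lim_{N→∞} L_N / L_0^{(N)} = 1. -/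
/-!
Minimality of `L₀` against `L₀ + 1` bounds the exponential term `c e^{-γL₀}` by
`K σ²/N` with `K = (1 - e^{-γ})⁻¹`, so `C_N(L₀) ≤ (L₀ + K) σ²/N`; hence `c e^{-γL₀} → 0`
and `L₀ → ∞`. Since `C_N(L) ≥ L σ²/N`, a ratio `r = C_N(L_N)/C_N(L₀)` forces
`L_N ≤ r (L₀ + K)`. Since also `C_N(L) ≥ c e^{-γL}`, and comparison with the ceiling of the
continuous minimizer gives `e^{γL₀} ≤ e^{γ+1} c γ N/σ²`, the factor `N` cancels in
`e^{γ(L₀ - L_N)} ≤ γ e^{γ+1} r (L₀ + K)`. Dividing by `L₀ → ∞` with `r → 1`, both bounds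
give `L_N / L₀ → 1`.
-/

open Filter Real

/-- `expCost (σ ^ 2 / N) c γ L` is the paper's `C_N(L)`. -/
noncomputable def expCost (a c γ L : ℝ) : ℝ := L * a + c * exp (-γ * L)

section ExpCost

variable {a c γ : ℝ}

lemma mul_le_expCost (hc : 0 ≤ c) (L : ℝ) : L * a ≤ expCost a c γ L :=
  le_add_of_nonneg_right (by positivity)

lemma mul_exp_le_expCost (ha : 0 ≤ a) {L : ℝ} (hL : 0 ≤ L) :
    c * exp (-γ * L) ≤ expCost a c γ L :=
  le_add_of_nonneg_left (mul_nonneg hL ha)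

lemma expCost_pos (ha : 0 ≤ a) (hc : 0 < c) {L : ℝ} (hL : 0 ≤ L) : 0 < expCost a c γ L :=
  add_pos_of_nonneg_of_pos (mul_nonneg hL ha) (by positivity)

lemma mul_exp_le_of_expCost_le_succ (hγ : 0 < γ) {L : ℝ}
    (h : expCost a c γ L ≤ expCost a c γ (L + 1)) :
    c * exp (-γ * L) ≤ (1 - exp (-γ))⁻¹ * a := by
  have hpos : 0 < 1 - exp (-γ) := sub_pos.2 (exp_lt_one_iff.2 (neg_neg_of_pos hγ))
  have hshift : exp (-γ * (L + 1)) = exp (-γ * L) * exp (-γ) := by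
    rw [← exp_add]; ring_nf
  rw [← div_eq_inv_mul, le_div_iff₀ hpos]
  unfold expCost at h
  rw [hshift] at h
  linear_combination h

lemma expCost_le_of_expCost_le_succ (hγ : 0 < γ) {L : ℝ}
    (h : expCost a c γ L ≤ expCost a c γ (L + 1)) :
    expCost a c γ L ≤ (L + (1 - exp (-γ))⁻¹) * a := by
  have := mul_exp_le_of_expCost_le_succ hγ h
  unfold expCost
  linarith

lemma le_mul_add_of_expCost_le (ha : 0 < a) (hc : 0 ≤ c) (hγ : 0 < γ) {L₀ L r : ℝ}
    (hsucc : expCost a c γ L₀ ≤ expCost a c γ (L₀ + 1)) (hr : 0 ≤ r)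
    (hcost : expCost a c γ L ≤ r * expCost a c γ L₀) :
    L ≤ r * (L₀ + (1 - exp (-γ))⁻¹) := by
  refine le_of_mul_le_mul_right ?_ ha
  calc L * a ≤ expCost a c γ L := mul_le_expCost hc L
    _ ≤ r * expCost a c γ L₀ := hcost
    _ ≤ r * ((L₀ + (1 - exp (-γ))⁻¹) * a) :=
        mul_le_mul_of_nonneg_left (expCost_le_of_expCost_le_succ hγ hsucc) hr
    _ = r * (L₀ + (1 - exp (-γ))⁻¹) * a := by ring

/-- The continuous minimizer `x = log (c γ / a) / γ` costs `x a + a / γ`; its ceiling is a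
positive integer costing at most `a` more. -/
lemma mul_le_log_of_forall_expCost_le (ha : 0 < a) (hγ : 0 < γ) (hac : a < c * γ) {L₀ : ℝ}
    (hmin : ∀ L : ℕ, 1 ≤ L → expCost a c γ L₀ ≤ expCost a c γ L) :
    γ * L₀ ≤ log (c * γ / a) + γ + 1 := by
  have hc : 0 < c := pos_of_mul_pos_left (ha.trans hac) hγ.le
  set x := log (c * γ / a) / γ
  have hγx : γ * x = log (c * γ / a) := mul_div_cancel₀ _ hγ.ne'
  have hx0 : 0 < x := div_pos (log_pos ((one_lt_div ha).2 hac)) hγ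
  have hexp : c * exp (-γ * x) = a / γ := by
    rw [neg_mul, hγx, exp_neg, exp_log (by positivity)]
    field_simp
  have hceil : expCost a c γ ⌈x⌉₊ ≤ (x + 1) * a + a / γ := by
    unfold expCost
    rw [← hexp]
    gcongr ?_ * a + c * ?_
    · exact (Nat.ceil_lt_add_one hx0.le).le
    · exact exp_le_exp.2 (mul_le_mul_of_nonpos_left (Nat.le_ceil x) (by linarith))
  have hL₀ : L₀ * a ≤ (x + 1 + γ⁻¹) * a := by
    calc L₀ * a ≤ expCost a c γ L₀ := mul_le_expCost hc.le L₀
      _ ≤ expCost a c γ ⌈x⌉₊ := hmin _ (Nat.one_le_ceil_iff.2 hx0)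
      _ ≤ (x + 1) * a + a / γ := hceil
      _ = (x + 1 + γ⁻¹) * a := by ring
  have := mul_le_mul_of_nonneg_left (le_of_mul_le_mul_right hL₀ ha) hγ.le
  rw [mul_add, mul_add, hγx, mul_inv_cancel₀ hγ.ne', mul_one] at this
  exact this

lemma mul_sub_le_log_of_expCost_le (ha : 0 < a) (hγ : 0 < γ) (hac : a < c * γ) {L₀ : ℕ}
    (hmin : ∀ L : ℕ, 1 ≤ L → expCost a c γ L₀ ≤ expCost a c γ L) {L r : ℝ} (hL : 0 ≤ L)
    (hr : 0 < r) (hcost : expCost a c γ L ≤ r * expCost a c γ L₀) :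
    γ * (L₀ - L) ≤ log (γ * exp (γ + 1) * r * (L₀ + (1 - exp (-γ))⁻¹)) := by
  have hc : 0 < c := pos_of_mul_pos_left (ha.trans hac) hγ.le
  have hK : 0 < (1 - exp (-γ))⁻¹ :=
    inv_pos.2 (sub_pos.2 (exp_lt_one_iff.2 (neg_neg_of_pos hγ)))
  have hsucc := hmin (L₀ + 1) le_add_self
  push_cast at hsucc
  have hL₀ : exp (γ * L₀) ≤ exp (γ + 1) * (c * γ / a) := by
    rw [mul_comm, ← exp_log (by positivity : 0 < c * γ / a), ← exp_add, exp_le_exp]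
    linarith [mul_le_log_of_forall_expCost_le ha hγ hac hmin]
  have hL : c * exp (-γ * L) ≤ r * ((L₀ + (1 - exp (-γ))⁻¹) * a) :=
    (mul_exp_le_expCost ha.le hL).trans
      (hcost.trans (mul_le_mul_of_nonneg_left (expCost_le_of_expCost_le_succ hγ hsucc) hr.le))
  rw [le_log_iff_exp_le (by positivity)]
  refine le_of_mul_le_mul_left ?_ hc
  calc c * exp (γ * (L₀ - L)) = exp (γ * L₀) * (c * exp (-γ * L)) := by
        rw [mul_sub, sub_eq_add_neg, exp_add, ← neg_mul]; ring
    _ ≤ exp (γ + 1) * (c * γ / a) * (r * ((L₀ + (1 - exp (-γ))⁻¹) * a)) := by gcongr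
    _ = c * (γ * exp (γ + 1) * r * (L₀ + (1 - exp (-γ))⁻¹)) := by field_simp

end ExpCost

lemma tendsto_atTop_of_expCost_le_succ {ι : Type*} {l : Filter ι} {a ℓ : ι → ℝ} {c γ : ℝ}
    (hc : 0 < c) (hγ : 0 < γ) (ha : Tendsto a l (nhds 0))
    (hsucc : ∀ᶠ i in l, expCost (a i) c γ (ℓ i) ≤ expCost (a i) c γ (ℓ i + 1)) :
    Tendsto ℓ l atTop := by
  have hexp : Tendsto (fun i => exp (-γ * ℓ i)) l (nhds 0) := by
    refine tendsto_of_tendsto_of_tendsto_of_le_of_le' tendsto_const_nhds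
      (by simpa using ha.const_mul ((1 - exp (-γ))⁻¹ / c)) (.of_forall fun i => (exp_pos _).le) ?_
    filter_upwards [hsucc] with i hi
    rw [div_mul_eq_mul_div, le_div_iff₀ hc, mul_comm]
    exact mul_exp_le_of_expCost_le_succ hγ hi
  exact (tendsto_const_mul_atBot_of_neg (neg_neg_of_pos hγ)).mp (tendsto_exp_comp_nhds_zero.mp hexp)

lemma tendsto_log_add_const_div_atTop (K : ℝ) :
    Tendsto (fun t => log (t + K) / t) atTop (nhds 0) := by
  have h := (tendsto_pow_log_div_mul_add_atTop 1 (-K) 1 one_ne_zero).comp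
    (tendsto_atTop_add_const_right atTop K tendsto_id)
  simpa [Function.comp_def] using h

section Asymptotics

variable {ι : Type*} {l : Filter ι} {ℓ m r : ι → ℝ} {γ K M : ℝ}

lemma tendsto_log_mul_mul_add_div (hM : 0 < M) (hℓ : Tendsto ℓ l atTop)
    (hr : Tendsto r l (nhds 1)) :
    Tendsto (fun i => log (M * r i * (ℓ i + K)) / ℓ i) l (nhds 0) := by
  have hMr : Tendsto (fun i => log (M * r i) / ℓ i) l (nhds 0) :=
    ((tendsto_const_nhds.mul hr).log (by simpa using hM.ne')).div_atTop hℓ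
  have hsum := hMr.add ((tendsto_log_add_const_div_atTop K).comp hℓ)
  rw [add_zero] at hsum
  refine hsum.congr' ?_
  filter_upwards [hr.eventually (lt_mem_nhds one_pos), hℓ.eventually_gt_atTop (-K)]
    with i hri hℓi
  have hMri : 0 < M * r i := mul_pos hM hri
  rw [Function.comp_apply, ← add_div, log_mul hMri.ne' (by linarith)]

lemma tendsto_div_of_le_mul_add_of_mul_sub_le_log (hγ : 0 < γ) (hM : 0 < M)
    (hℓ : Tendsto ℓ l atTop) (hr : Tendsto r l (nhds 1))
    (hupper : ∀ᶠ i in l, m i ≤ r i * (ℓ i + K))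
    (hlower : ∀ᶠ i in l, γ * (ℓ i - m i) ≤ log (M * r i * (ℓ i + K))) :
    Tendsto (fun i => m i / ℓ i) l (nhds 1) := by
  have hlog := tendsto_log_mul_mul_add_div (K := K) hM hℓ hr
  have hbelow : Tendsto (fun i => 1 - γ⁻¹ * (log (M * r i * (ℓ i + K)) / ℓ i)) l (nhds 1) := by
    simpa using tendsto_const_nhds.sub (hlog.const_mul γ⁻¹)
  have habove : Tendsto (fun i => r i * (1 + K / ℓ i)) l (nhds 1) := by
    simpa using hr.mul (tendsto_const_nhds.add (tendsto_const_nhds.div_atTop hℓ))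
  refine tendsto_of_tendsto_of_tendsto_of_le_of_le' hbelow habove ?_ ?_
  · filter_upwards [hlower, hℓ.eventually_gt_atTop 0] with i hi hℓi
    rw [le_div_iff₀ hℓi]
    have : ℓ i - m i ≤ γ⁻¹ * log (M * r i * (ℓ i + K)) := by
      rw [le_inv_mul_iff₀ hγ]; exact hi
    field_simp
    linarith
  · filter_upwards [hupper, hℓ.eventually_gt_atTop 0] with i hi hℓi
    rw [div_le_iff₀ hℓi]
    field_simp
    linarith

end Asymptotics

theorem wellSeparatedMode_exponential_general (γ c σ : ℝ) (hγ : 0 < γ) (hc : 0 < c) (hσ : 0 < σ)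
    (C : ℕ → ℕ → ℝ)
    (hC : ∀ N L : ℕ, C N L = (L : ℝ) * σ ^ 2 / (N : ℝ) + c * Real.exp (-γ * (L : ℝ)))
    (L0 : ℕ → ℕ)
    (hL0 : ∀ N ≥ 1, 1 ≤ L0 N ∧ ∀ L ≥ 1, C N (L0 N) ≤ C N L)
    (LN : ℕ → ℕ)
    (hlim : Tendsto (fun N => C N (LN N) / C N (L0 N)) atTop (nhds 1)) :
    Tendsto (fun N => (LN N : ℝ) / (L0 N : ℝ)) atTop (nhds 1) := by
  set a : ℕ → ℝ := fun N => σ ^ 2 / N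
  set r : ℕ → ℝ := fun N => C N (LN N) / C N (L0 N)
  have hCa : ∀ N L, C N L = expCost (a N) c γ L := fun N L => by
    rw [hC, expCost, mul_div_assoc]
  have ha : Tendsto a atTop (nhds 0) := tendsto_const_nhds.div_atTop tendsto_natCast_atTop_atTop
  have hsetting : ∀ᶠ N in atTop, 0 < a N ∧ a N < c * γ ∧
      (∀ L : ℕ, 1 ≤ L → expCost (a N) c γ (L0 N) ≤ expCost (a N) c γ L) ∧
      expCost (a N) c γ (L0 N) ≤ expCost (a N) c γ (L0 N + 1) ∧
      0 < r N ∧ expCost (a N) c γ (LN N) ≤ r N * expCost (a N) c γ (L0 N) := by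
    filter_upwards [eventually_ge_atTop 1, ha.eventually (gt_mem_nhds (mul_pos hc hγ))]
      with N hN hsmall
    have haN : 0 < a N := by positivity
    have hpos : ∀ L : ℕ, 0 < C N L := fun L => hCa N L ▸ expCost_pos haN.le hc L.cast_nonneg
    have hmin : ∀ L : ℕ, 1 ≤ L → expCost (a N) c γ (L0 N) ≤ expCost (a N) c γ L :=
      fun L hL => by simpa only [hCa] using (hL0 N hN).2 L hL
    refine ⟨haN, hsmall, hmin, by exact_mod_cast hmin (L0 N + 1) le_add_self,
      div_pos (hpos _) (hpos _), ?_⟩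
    rw [← hCa, ← hCa, div_mul_cancel₀ _ (hpos _).ne']
  have hℓ : Tendsto (fun N => (L0 N : ℝ)) atTop atTop :=
    tendsto_atTop_of_expCost_le_succ hc hγ ha (hsetting.mono fun N h => h.2.2.2.1)
  refine tendsto_div_of_le_mul_add_of_mul_sub_le_log (K := (1 - exp (-γ))⁻¹)
    (M := γ * exp (γ + 1)) hγ (by positivity) hℓ hlim ?_ ?_
  · filter_upwards [hsetting] with N ⟨haN, _, _, hsucc, hr, hcost⟩
    exact le_mul_add_of_expCost_le haN hc.le hγ hsucc hr.le hcost
  · filter_upwards [hsetting] with N ⟨haN, hsmall, hmin, _, hr, hcost⟩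
    exact mul_sub_le_log_of_expCost_le haN hγ hsmall hmin (Nat.cast_nonneg _) hr hcost

/-- Remark 4, exponential decay: `C_N` has a well-separated mode.
With `C_N(L) = L σ²/N + c e^{-γL}`, if `L_0^{(N)}` minimizes `C_N` over the positive
integers and `(L_N)` is a sequence of positive integers with
`C_N(L_N)/C_N(L_0^{(N)}) → 1`, then `L_N / L_0^{(N)} → 1`. -/
theorem wellSeparatedMode_exponential (γ c σ : ℝ) (hγ : 0 < γ) (hc : 0 < c) (hσ : 0 < σ)
    (C : ℕ → ℕ → ℝ)
    (hC : ∀ N L : ℕ, C N L = (L : ℝ) * σ ^ 2 / (N : ℝ) + c * Real.exp (-γ * (L : ℝ)))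
    (L0 : ℕ → ℕ)
    (hL0 : ∀ N ≥ 1, 1 ≤ L0 N ∧ ∀ L ≥ 1, C N (L0 N) ≤ C N L)
    (LN : ℕ → ℕ) (hLN : ∀ N, 1 ≤ LN N)
    (hlim : Tendsto (fun N => C N (LN N) / C N (L0 N)) atTop (nhds 1)) :
    Tendsto (fun N => (LN N : ℝ) / (L0 N : ℝ)) atTop (nhds 1) :=
  wellSeparatedMode_exponential_general γ c σ hγ hc hσ C hC L0 hL0 LN hlim
end

section
/- (Rate of the universally optimal order under exponential decay.) Fix constants γ > 0, c > 0 and σ > 0, and for each integer N ≥ 2 define C_N(L) = L σ²/N + c e^{−γL} for positive integers L. Then there exist constants 0 < c_1 < c_2 and an integer N_1 such that for all N ≥ N_1, every minimizer L_0^{(N)} of C_N over the positive integers satisfies c_1 log N ≤ L_0^{(N)} ≤ c_2 log N; in particular L_0^{(N)} = Θ(log N). -/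
/-- rate of the universally optimal order under exponential decay.
With `C_N(L) = L σ²/N + c e^{-γL}`, there exist constants `0 < c₁ < c₂` and `N₁` such
that for all `N ≥ N₁`, every minimizer of `C_N` over the positive integers lies between
`c₁ log N` and `c₂ log N`; i.e. `L_0^{(N)} = Θ(log N)`. -/
theorem optimalOrder_rate_exponential (γ c σ : ℝ) (hγ : 0 < γ) (hc : 0 < c) (hσ : 0 < σ)
    (C : ℕ → ℕ → ℝ)
    (hC : ∀ N L : ℕ, 2 ≤ N →
      C N L = (L : ℝ) * σ ^ 2 / (N : ℝ) + c * Real.exp (-γ * (L : ℝ))) :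
    ∃ c₁ c₂ : ℝ, ∃ N₁ : ℕ, 0 < c₁ ∧ c₁ < c₂ ∧
      ∀ N ≥ N₁, ∀ L0 : ℕ, (1 ≤ L0 ∧ ∀ L ≥ 1, C N L0 ≤ C N L) →
        c₁ * Real.log (N : ℝ) ≤ (L0 : ℝ) ∧ (L0 : ℝ) ≤ c₂ * Real.log (N : ℝ) := by
  set A : ℝ := σ ^ 2 / γ with hA
  set B : ℝ := σ ^ 2 + c with hB
  have hA0 : 0 < A := div_pos (pow_pos hσ 2) hγ
  have hB0 : 0 < B := by positivity
  -- eventual facts over real `t`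
  have h2 : ∀ᶠ t : ℝ in Filter.atTop,
      A * Real.log t + B ≤ c * Real.exp (Real.log t / 2) := by
    have hlo := (isLittleO_log_rpow_atTop (by norm_num : (0:ℝ) < 1/2)).bound
      (show (0:ℝ) < c / (2 * A) by positivity)
    have hBig : Filter.Tendsto (fun t : ℝ => Real.exp (Real.log t / 2))
        Filter.atTop Filter.atTop :=
      Real.tendsto_exp_atTop.comp (Real.tendsto_log_atTop.atTop_div_const two_pos)
    filter_upwards [hlo, hBig.eventually_ge_atTop (2 * B / c),
      Filter.eventually_ge_atTop (1:ℝ)] with t hlo' hBt ht1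
    have ht0 : 0 < t := lt_of_lt_of_le one_pos ht1
    have hrp : t ^ ((1:ℝ)/2) = Real.exp (Real.log t / 2) := by
      rw [Real.rpow_def_of_pos ht0]; ring_nf
    have hlog0 : 0 ≤ Real.log t := Real.log_nonneg ht1
    have hrp0 : 0 ≤ t ^ ((1:ℝ)/2) := Real.rpow_nonneg ht0.le _
    rw [Real.norm_eq_abs, Real.norm_eq_abs, abs_of_nonneg hlog0, abs_of_nonneg hrp0,
      hrp] at hlo'
    have h1 : A * Real.log t ≤ (c/2) * Real.exp (Real.log t / 2) := by
      have := mul_le_mul_of_nonneg_left hlo' hA0.le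
      calc A * Real.log t ≤ A * (c / (2*A) * Real.exp (Real.log t / 2)) := this
        _ = (c/2) * Real.exp (Real.log t / 2) := by field_simp
    have h2' : B ≤ (c/2) * Real.exp (Real.log t / 2) := by
      have : 2 * B / c ≤ Real.exp (Real.log t / 2) := hBt
      rw [div_le_iff₀ hc] at this
      nlinarith
    linarith
  have h2' := tendsto_natCast_atTop_atTop.eventually h2
  have h1 : ∀ᶠ N : ℕ in Filter.atTop, γ * (1 + c / σ ^ 2) ≤ Real.log N :=
    (Real.tendsto_log_atTop.comp tendsto_natCast_atTop_atTop).eventually_ge_atTop _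
  obtain ⟨N₁, hN₁⟩ := Filter.eventually_atTop.mp
    ((h1.and h2').and (Filter.eventually_ge_atTop 2))
  refine ⟨1/(2*γ), 2/γ, N₁, by positivity, ?_, ?_⟩
  · rw [div_lt_div_iff₀ (by positivity) hγ]; nlinarith
  intro N hN L0 ⟨hL0, hmin⟩
  obtain ⟨⟨hlog, hsmall⟩, hN2⟩ := hN₁ N hN
  set x : ℝ := Real.log N with hx
  have hγc : 0 < γ * (1 + c / σ ^ 2) := by positivity
  have hx0 : 0 < x := lt_of_lt_of_le hγc hlog
  have hN0 : (0:ℝ) < N := by exact_mod_cast lt_of_lt_of_le two_pos hN2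
  have hexpx : Real.exp x = N := Real.exp_log hN0
  set Ls : ℕ := max 1 ⌈x / γ⌉₊ with hLs
  have hLs1 : 1 ≤ Ls := le_max_left _ _
  have hxγ0 : 0 ≤ x / γ := by positivity
  have hge : x / γ ≤ (Ls : ℝ) := by
    refine (Nat.le_ceil _).trans ?_
    exact_mod_cast le_max_right 1 ⌈x / γ⌉₊
  have hle : (Ls : ℝ) ≤ x / γ + 1 := by
    rw [hLs, Nat.cast_max]
    refine max_le (by linarith) ?_
    exact (Nat.ceil_lt_add_one hxγ0).le
  -- cost at Ls
  have hCs : C N Ls ≤ ((Ls : ℝ) * σ ^ 2 + c) / N := by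
    rw [hC N Ls hN2]
    have hexp : Real.exp (-γ * Ls) ≤ 1 / N := by
      have : -γ * (Ls : ℝ) ≤ -x := by
        have : x ≤ γ * Ls := by rw [div_le_iff₀ hγ] at hge; linarith [hge]
        linarith
      calc Real.exp (-γ * Ls) ≤ Real.exp (-x) := Real.exp_le_exp.mpr this
        _ = 1 / N := by rw [Real.exp_neg, hexpx, one_div]
    have : c * Real.exp (-γ * Ls) ≤ c * (1 / N) := by
      exact mul_le_mul_of_nonneg_left hexp hc.le
    calc (Ls : ℝ) * σ ^ 2 / N + c * Real.exp (-γ * Ls)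
        ≤ (Ls : ℝ) * σ ^ 2 / N + c * (1 / N) := by linarith
      _ = ((Ls : ℝ) * σ ^ 2 + c) / N := by ring
  have hmain : C N L0 ≤ ((Ls : ℝ) * σ ^ 2 + c) / N := (hmin Ls hLs1).trans hCs
  rw [hC N L0 hN2] at hmain
  have hexp0 : 0 ≤ c * Real.exp (-γ * L0) := by positivity
  have hdiv0 : 0 ≤ (L0 : ℝ) * σ ^ 2 / N := by positivity
  constructor
  · -- lower bound
    have hl1 : c * Real.exp (-γ * L0) ≤ ((Ls : ℝ) * σ ^ 2 + c) / N := by linarith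
    have hnum : (Ls : ℝ) * σ ^ 2 + c ≤ A * x + B := by
      rw [hA, hB]
      have h := mul_le_mul_of_nonneg_right hle (sq_nonneg σ)
      have heq : (x / γ + 1) * σ ^ 2 = σ ^ 2 / γ * x + σ ^ 2 := by ring
      linarith
    have hl2' : ((Ls : ℝ) * σ ^ 2 + c) / N ≤ (A * x + B) / N := by gcongr
    have hl3 : (A * x + B) / N ≤ c * Real.exp (x / 2) / N := by gcongr
    have hl4 : c * Real.exp (x / 2) / N = c * Real.exp (-(x/2)) := by
      rw [← hexpx, mul_div_assoc, ← Real.exp_sub]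
      congr 1; ring
    have hl5 : Real.exp (-γ * L0) ≤ Real.exp (-(x/2)) := by
      have : c * Real.exp (-γ * L0) ≤ c * Real.exp (-(x/2)) := by
        rw [← hl4]; linarith
      exact le_of_mul_le_mul_left this hc
    have hl6 : -γ * (L0 : ℝ) ≤ -(x/2) := Real.exp_le_exp.mp hl5
    rw [div_mul_eq_mul_div, one_mul, div_le_iff₀ (by positivity)]
    nlinarith
  · -- upper bound
    have hu : (L0 : ℝ) * σ ^ 2 ≤ (Ls : ℝ) * σ ^ 2 + c := by
      have h1' : (L0 : ℝ) * σ ^ 2 / N ≤ ((Ls : ℝ) * σ ^ 2 + c) / N := by linarith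
      rw [div_le_div_iff₀ hN0 hN0] at h1'
      exact le_of_mul_le_mul_right (by linarith) hN0
    have hub : (L0 : ℝ) ≤ (Ls : ℝ) + c / σ ^ 2 := by
      have h2'' : (L0 : ℝ) * σ ^ 2 ≤ ((Ls : ℝ) + c / σ ^ 2) * σ ^ 2 := by
        rw [add_mul, div_mul_cancel₀ _ (by positivity : (σ:ℝ) ^ 2 ≠ 0)]
        exact hu
      exact le_of_mul_le_mul_right h2'' (by positivity)
    have hxγ : 1 + c / σ ^ 2 ≤ x / γ := by
      rw [le_div_iff₀ hγ]; linarith [hlog]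
    have : 2 / γ * x = x / γ + x / γ := by ring
    linarith
end

section
/- (Example in Proposition 2: BIC-penalized optimal order is negligible relative to the universally optimal order under algebraic decay.) Fix constants γ > 0, c > 0 and σ > 0. For each integer N ≥ 3 define, for positive integers L, C_N(L) = L σ²/N + c L^{−γ} and D_N(L) = C_N(L) + (log N − 2) L σ²/N. Let L_0^{(N)} be any minimizer of C_N over the positive integers and L_*^{(N)} any minimizer of D_N over the positive integers (both exist). Then lim_{N→∞} L_*^{(N)} / L_0^{(N)} = 0. -/
open Filter

set_option maxHeartbeats 1600000

/-- example in Proposition 2: the BIC-penalized optimal order is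
negligible relative to the universally optimal order under algebraic decay.
With `C_N(L) = L σ²/N + c L^{-γ}` and `D_N(L) = C_N(L) + (log N - 2) L σ²/N`, if
`L_0^{(N)}` minimizes `C_N` and `L_*^{(N)}` minimizes `D_N` over the positive integers,
then `L_*^{(N)} / L_0^{(N)} → 0` as `N → ∞`. -/
theorem bic_order_negligible_algebraic (γ c σ : ℝ) (hγ : 0 < γ) (hc : 0 < c)
    (hσ : 0 < σ) (C D : ℕ → ℕ → ℝ)
    (hC : ∀ N L : ℕ, C N L = (L : ℝ) * σ ^ 2 / (N : ℝ) + c * (L : ℝ) ^ (-γ))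
    (hD : ∀ N L : ℕ, D N L = C N L + (Real.log (N : ℝ) - 2) * (L : ℝ) * σ ^ 2 / (N : ℝ))
    (L0 : ℕ → ℕ) (hL0 : ∀ N ≥ 3, 1 ≤ L0 N ∧ ∀ L ≥ 1, C N (L0 N) ≤ C N L)
    (Ls : ℕ → ℕ) (hLs : ∀ N ≥ 3, 1 ≤ Ls N ∧ ∀ L ≥ 1, D N (Ls N) ≤ D N L) :
    Tendsto (fun N => (Ls N : ℝ) / (L0 N : ℝ)) atTop (nhds 0) := by
  have hγ1 : (0:ℝ) < 1 + γ := by linarith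
  set α : ℝ := (1+γ)⁻¹ with hαdef
  have hα : 0 < α := by positivity
  have hα1 : α * (1+γ) = 1 := inv_mul_cancel₀ (ne_of_gt hγ1)
  have hαγlt : α * γ < 1 := by nlinarith
  have hexp : α - 1 = -(α*γ) := by nlinarith
  have hid2 : 1 - α*γ = α := by nlinarith
  set K1 : ℝ := 2*σ^2 + c with hK1def
  have hK1 : 0 < K1 := by positivity
  set k : ℝ := (c/K1) ^ (γ⁻¹) with hkdef
  have hk : 0 < k := Real.rpow_pos_of_pos (by positivity) _
  set K : ℝ := 2 * (K1/(σ^2 * k)) with hKdef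
  have hK : 0 < K := by positivity
  clear_value α K1 k K
  have hlim : Tendsto (fun N : ℕ => K * (Real.log N) ^ (α*γ - 1)) atTop (nhds 0) := by
    have h1 : Tendsto (fun x : ℝ => x ^ (α*γ-1)) atTop (nhds 0) := by
      have := tendsto_rpow_neg_atTop (y := 1 - α*γ) (by linarith)
      simpa [neg_sub] using this
    have h2 : Tendsto (fun N : ℕ => Real.log N) atTop atTop :=
      Real.tendsto_log_atTop.comp tendsto_natCast_atTop_atTop
    have := (h1.comp h2).const_mul K
    simpa using this
  apply squeeze_zero' ?_ ?_ hlim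
  · filter_upwards [eventually_ge_atTop 3] with N _
    positivity
  · filter_upwards [eventually_ge_atTop 8] with N hN
    have hN3 : N ≥ 3 := by omega
    obtain ⟨hL01, hL0min⟩ := hL0 N hN3
    obtain ⟨hLs1, hLsmin⟩ := hLs N hN3
    have hn8 : (8:ℝ) ≤ (N:ℝ) := by exact_mod_cast hN
    have hn0 : (0:ℝ) < N := by linarith
    have hlog2 : (2:ℝ) ≤ Real.log N := by
      have h8 : Real.log 8 ≤ Real.log N := Real.log_le_log (by norm_num) hn8
      have : Real.log 8 = 3 * Real.log 2 := by
        rw [show (8:ℝ) = 2^(3:ℕ) by norm_num, Real.log_pow]; push_cast; ring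
      have h2 := Real.log_two_gt_d9
      rw [this] at h8; linarith
    have hlogpos : (0:ℝ) < Real.log N := by linarith
    have hlm1 : (1:ℝ) ≤ Real.log N - 1 := by linarith
    have hlm1pos : (0:ℝ) < Real.log N - 1 := by linarith
    have hhalf : Real.log N / 2 ≤ Real.log N - 1 := by linarith
    -- Step A : lower bound on L0
    set A : ℕ := ⌈(N:ℝ)^α⌉₊ with hAdef
    have hNα1 : (1:ℝ) ≤ (N:ℝ)^α := Real.one_le_rpow (by linarith) hα.le
    have hNαpos : (0:ℝ) < (N:ℝ)^α := by linarith
    have hA1 : 1 ≤ A := Nat.one_le_ceil_iff.mpr (by linarith)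
    have hAge : (N:ℝ)^α ≤ (A:ℝ) := Nat.le_ceil _
    have hAle : (A:ℝ) ≤ 2*(N:ℝ)^α := by
      have := Nat.ceil_lt_add_one (le_of_lt hNαpos)
      linarith
    have hApos : (0:ℝ) < (A:ℝ) := lt_of_lt_of_le hNαpos hAge
    clear_value A
    have hCA : C N A ≤ K1 * (N:ℝ)^(-(α*γ)) := by
      rw [hC]
      have e0 : (N:ℝ)^α / (N:ℝ) = (N:ℝ)^(-(α*γ)) := by
        rw [← hexp, Real.rpow_sub hn0, Real.rpow_one]
      have h1 : (A:ℝ)*σ^2/(N:ℝ) ≤ 2*σ^2 * (N:ℝ)^(-(α*γ)) := by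
        calc (A:ℝ)*σ^2/(N:ℝ) ≤ 2*(N:ℝ)^α*σ^2/(N:ℝ) := by gcongr
          _ = 2*σ^2*((N:ℝ)^α/(N:ℝ)) := by ring
          _ = 2*σ^2*(N:ℝ)^(-(α*γ)) := by rw [e0]
      have h2 : c * (A:ℝ)^(-γ) ≤ c * (N:ℝ)^(-(α*γ)) := by
        have hb : ((N:ℝ)^α)^(-γ) = (N:ℝ)^(-(α*γ)) := by
          rw [← Real.rpow_mul hn0.le]; ring_nf
        have := Real.rpow_le_rpow_of_nonpos hNαpos hAge (neg_nonpos.mpr hγ.le)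
        rw [hb] at this
        exact mul_le_mul_of_nonneg_left this hc.le
      have : K1 * (N:ℝ)^(-(α*γ)) = 2*σ^2 * (N:ℝ)^(-(α*γ)) + c * (N:ℝ)^(-(α*γ)) := by
        rw [hK1def]; ring
      linarith
    have hL0pos : (0:ℝ) < (L0 N : ℝ) := by exact_mod_cast hL01
    have hCL0 : c * ((L0 N:ℝ))^(-γ) ≤ K1 * (N:ℝ)^(-(α*γ)) := by
      have hmin := hL0min A hA1
      rw [hC, hC] at hmin
      have hCA' := hCA
      rw [hC] at hCA'
      have hpos : (0:ℝ) ≤ (L0 N:ℝ)*σ^2/(N:ℝ) := by positivity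
      linarith
    have hL0low : k * (N:ℝ)^α ≤ (L0 N:ℝ) := by
      have hRpos : (0:ℝ) < (K1/c) * (N:ℝ)^(-(α*γ)) := by positivity
      have hLpow : (0:ℝ) < ((L0 N:ℝ))^(-γ) := Real.rpow_pos_of_pos hL0pos _
      have h : ((L0 N:ℝ))^(-γ) ≤ (K1/c) * (N:ℝ)^(-(α*γ)) := by
        rw [div_mul_eq_mul_div, le_div_iff₀ hc]
        nlinarith
      have h2 := Real.rpow_le_rpow_of_nonpos hLpow h
        (neg_nonpos.mpr (le_of_lt (inv_pos.mpr hγ)))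
      have e1 : (((L0 N:ℝ))^(-γ))^(-(γ⁻¹)) = (L0 N:ℝ) := by
        rw [← Real.rpow_mul hL0pos.le]
        rw [show (-γ) * (-(γ⁻¹)) = 1 by field_simp, Real.rpow_one]
      have e2 : ((K1/c) * (N:ℝ)^(-(α*γ)))^(-(γ⁻¹)) = k * (N:ℝ)^α := by
        rw [Real.mul_rpow (by positivity) (by positivity)]
        congr 1
        · rw [hkdef, Real.rpow_neg (by positivity), ← Real.inv_rpow (by positivity),
            inv_div]
        · rw [← Real.rpow_mul hn0.le]
          congr 1
          field_simp
      rw [e1, e2] at h2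
      exact h2
    -- Step B : upper bound on Ls
    set q : ℝ := (N:ℝ)/Real.log N with hqdef
    have hq1 : (1:ℝ) ≤ q := by
      rw [hqdef, le_div_iff₀ hlogpos]
      have := Real.log_le_sub_one_of_pos hn0
      linarith
    have hqpos : (0:ℝ) < q := by linarith
    set t : ℝ := q^α with htdef
    have ht1 : (1:ℝ) ≤ t := Real.one_le_rpow hq1 hα.le
    have htpos : (0:ℝ) < t := by linarith
    set B : ℕ := ⌈t⌉₊ with hBdef
    have hB1 : 1 ≤ B := Nat.one_le_ceil_iff.mpr (by linarith)
    have hBge : t ≤ (B:ℝ) := Nat.le_ceil _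
    have hBle : (B:ℝ) ≤ 2*t := by
      have := Nat.ceil_lt_add_one (le_of_lt htpos)
      linarith
    have hBpos : (0:ℝ) < (B:ℝ) := lt_of_lt_of_le htpos hBge
    clear_value B
    have hDform : ∀ L:ℕ, D N L = (Real.log N - 1)*(L:ℝ)*σ^2/(N:ℝ) + c*(L:ℝ)^(-γ) := by
      intro L; rw [hD, hC]; ring
    have hqexp : q^(α-1) = (N:ℝ)^(-(α*γ)) * (Real.log N)^(α*γ) := by
      rw [hexp, hqdef, Real.div_rpow hn0.le hlogpos.le, Real.rpow_neg (by positivity),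
        Real.rpow_neg hlogpos.le]
      field_simp
    have hDB : D N B ≤ K1 * q^(α-1) := by
      rw [hDform]
      have e1 : t * (Real.log N / (N:ℝ)) = q^(α-1) := by
        rw [Real.rpow_sub hqpos, Real.rpow_one, htdef, div_eq_mul_inv (q^α), hqdef, inv_div]
      have h1 : (Real.log N - 1)*(B:ℝ)*σ^2/(N:ℝ) ≤ 2*σ^2 * q^(α-1) := by
        have hBt : (Real.log ↑N - 1)*(B:ℝ) ≤ Real.log ↑N * (2*t) :=
          mul_le_mul (by linarith) hBle hBpos.le hlogpos.le
        calc (Real.log ↑N - 1)*(B:ℝ)*σ^2/(N:ℝ)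
            = ((Real.log ↑N - 1)*(B:ℝ))*σ^2/(N:ℝ) := by ring
          _ ≤ (Real.log ↑N * (2*t))*σ^2/(N:ℝ) := by gcongr
          _ = 2*σ^2 * (t * (Real.log ↑N / (N:ℝ))) := by ring
          _ = 2*σ^2 * q^(α-1) := by rw [e1]
      have h2 : c*(B:ℝ)^(-γ) ≤ c * q^(α-1) := by
        have hbb : t^(-γ) ≤ q^(α-1) := by
          rw [htdef, ← Real.rpow_mul hqpos.le]
          apply le_of_eq
          congr 1
          linarith [hexp]
        have := Real.rpow_le_rpow_of_nonpos htpos hBge (neg_nonpos.mpr hγ.le)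
        exact mul_le_mul_of_nonneg_left (this.trans hbb) hc.le
      have : K1 * q^(α-1) = 2*σ^2 * q^(α-1) + c * q^(α-1) := by rw [hK1def]; ring
      linarith
    have hLspos : (0:ℝ) < (Ls N : ℝ) := by exact_mod_cast hLs1
    have hLsub : (Ls N:ℝ) ≤ (K1/σ^2) * (N:ℝ)^α * (Real.log N)^(α*γ) / (Real.log N - 1) := by
      have hmin := hLsmin B hB1
      have hkey : (Real.log N - 1)*(Ls N:ℝ)*σ^2/(N:ℝ) ≤ K1 * q^(α-1) := by
        have : (Real.log N - 1)*(Ls N:ℝ)*σ^2/(N:ℝ) ≤ D N (Ls N) := by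
          rw [hDform]
          have : (0:ℝ) ≤ c*(Ls N:ℝ)^(-γ) := by positivity
          linarith
        exact this.trans (hmin.trans hDB)
      rw [div_le_iff₀ hn0] at hkey
      rw [le_div_iff₀ hlm1pos]
      have hmul : (N:ℝ)^(-(α*γ)) * (N:ℝ) = (N:ℝ)^α := by
        nth_rewrite 2 [← Real.rpow_one (N:ℝ)]
        rw [← Real.rpow_add hn0]
        congr 1
        linarith
      have hEq : K1 * q^(α-1) * (N:ℝ) = (K1/σ^2) * (N:ℝ)^α * (Real.log ↑N)^(α*γ) * σ^2 := by
        rw [hqexp]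
        calc K1 * ((N:ℝ)^(-(α*γ)) * (Real.log ↑N)^(α*γ)) * (N:ℝ)
            = K1 * (Real.log ↑N)^(α*γ) * ((N:ℝ)^(-(α*γ)) * (N:ℝ)) := by ring
          _ = K1 * (Real.log ↑N)^(α*γ) * (N:ℝ)^α := by rw [hmul]
          _ = (K1/σ^2) * (N:ℝ)^α * (Real.log ↑N)^(α*γ) * σ^2 := by
              field_simp
      rw [hEq] at hkey
      have h4 : ((Ls N:ℝ)*(Real.log ↑N - 1)) * σ^2
          ≤ ((K1/σ^2) * (N:ℝ)^α * (Real.log ↑N)^(α*γ)) * σ^2 := by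
        linear_combination hkey
      exact le_of_mul_le_mul_right h4 (by positivity)
    -- combine
    have hkNpos : (0:ℝ) < k * (N:ℝ)^α := by positivity
    have hnum_nonneg : (0:ℝ) ≤ (K1/σ^2) * (N:ℝ)^α * (Real.log N)^(α*γ) := by positivity
    calc (Ls N:ℝ)/(L0 N:ℝ) ≤ (Ls N:ℝ)/(k * (N:ℝ)^α) :=
          div_le_div_of_nonneg_left hLspos.le hkNpos hL0low
      _ ≤ ((K1/σ^2) * (N:ℝ)^α * (Real.log N)^(α*γ) / (Real.log N - 1))/(k * (N:ℝ)^α) := by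
          gcongr
      _ = (K1/(σ^2*k)) * (Real.log N)^(α*γ) / (Real.log N - 1) := by
          field_simp
      _ ≤ (K1/(σ^2*k)) * (Real.log N)^(α*γ) / (Real.log N / 2) := by
          gcongr
      _ = K * (Real.log N)^(α*γ - 1) := by
          rw [Real.rpow_sub hlogpos, Real.rpow_one, hKdef]
          field_simp
end

section
/- (Reformulation of the Yule–Walker equations.) Let L ≥ 1 and let ψ = (ψ_1, …, ψ_L), ρ = (ρ_1, …, ρ_L) ∈ ℝ^L. Adopt the conventions ρ_0 = 1 and ψ_m = 0 whenever m ≤ 0 or m > L. Let P be the L×L matrix with entries P_{ij} = ρ_{|i−j|}, and let Φ be the L×L matrix with entries Φ_{ij} = ψ_{i+j} + ψ_{i−j} (so Φ is the sum of the Hankel matrix [ψ_{i+j}] and the strictly lower-triangular Toeplitz matrix [ψ_{i−j}], with zero diagonal). Then P ψ = −ρ if and only if (I + Φ) ρ = −ψ. Consequently, if I + Φ is invertible and the Yule–Walker equation P ψ = −ρ holds, then ρ = −(I + Φ)^{-1} ψ. -/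
open Matrix

/-- Extension of the coefficient vector `ψ = (ψ_1, …, ψ_L)` to all integer indices:
`ψ_m = 0` whenever `m ≤ 0` or `m > L`.  Here `ψ i` stands for `ψ_{i+1}`. -/
def psiExt {L : ℕ} (ψ : Fin L → ℝ) (m : ℤ) : ℝ :=
  if h : 1 ≤ m ∧ m ≤ (L : ℤ) then ψ ⟨(m - 1).toNat, by omega⟩ else 0

/-- Extension of the correlation vector `ρ = (ρ_1, …, ρ_L)` with the convention
`ρ_0 = 1` (and `ρ_m = 0` for `m > L`, which is never used for `|i - j| ≤ L - 1`). -/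
def rhoExt {L : ℕ} (ρ : Fin L → ℝ) (m : ℕ) : ℝ :=
  if h0 : m = 0 then 1 else if h : m ≤ L then ρ ⟨m - 1, by omega⟩ else 0

/-- The correlation matrix `P` with entries `P_{ij} = ρ_{|i-j|}` (and `ρ_0 = 1`). -/
def corrMatrix {L : ℕ} (ρ : Fin L → ℝ) : Matrix (Fin L) (Fin L) ℝ :=
  fun i j => rhoExt ρ (((i : ℤ) - (j : ℤ)).natAbs)

/-- The matrix `Φ` with 1-indexed entries `Φ_{ij} = ψ_{i+j} + ψ_{i-j}` (the sum of the
Hankel matrix `[ψ_{i+j}]` and the strictly lower-triangular Toeplitz matrix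
`[ψ_{i-j}]`, with zero diagonal). -/
def phiMatrix {L : ℕ} (ψ : Fin L → ℝ) : Matrix (Fin L) (Fin L) ℝ :=
  fun i j => psiExt ψ (((i : ℤ) + 1) + ((j : ℤ) + 1)) +
    psiExt ψ (((i : ℤ) + 1) - ((j : ℤ) + 1))

lemma psiExt_fin {L : ℕ} (ψ : Fin L → ℝ) (j : Fin L) : psiExt ψ ((j : ℤ) + 1) = ψ j := by
  have hj : (j : ℕ) < L := j.isLt
  rw [psiExt, dif_pos (by omega)]
  congr 1
  ext
  simp

lemma rhoExt_fin {L : ℕ} (ρ : Fin L → ℝ) (k : Fin L) : rhoExt ρ ((k : ℕ) + 1) = ρ k := by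
  rw [rhoExt, dif_neg (by omega), dif_pos (by omega)]
  congr 1

lemma psiExt_zero_of_nonpos {L : ℕ} (ψ : Fin L → ℝ) (m : ℤ) (h : m ≤ 0) : psiExt ψ m = 0 := by
  rw [psiExt, dif_neg (by omega)]

lemma psiExt_zero_of_gt {L : ℕ} (ψ : Fin L → ℝ) (m : ℤ) (h : (L : ℤ) < m) : psiExt ψ m = 0 := by
  rw [psiExt, dif_neg (by omega)]

lemma yw_key (L I : ℕ) (hI : I < L) (ψ ρ : Fin L → ℝ) :
    ∑ j ∈ Finset.range L, rhoExt ρ (((I : ℤ) - (j : ℤ)).natAbs) * psiExt ψ ((j : ℤ) + 1)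
      = psiExt ψ ((I : ℤ) + 1) +
        ∑ k ∈ Finset.range L,
          (psiExt ψ ((I : ℤ) + (k : ℤ) + 2) + psiExt ψ ((I : ℤ) - (k : ℤ))) *
            rhoExt ρ (k + 1) := by
  have hterm : ∀ j ∈ Finset.range L,
      rhoExt ρ (((I : ℤ) - (j : ℤ)).natAbs) * psiExt ψ ((j : ℤ) + 1)
        = (if j = I then psiExt ψ ((I : ℤ) + 1) else 0)
          + ((if I < j then psiExt ψ ((j : ℤ) + 1) * rhoExt ρ (j - I) else 0)
          + (if j < I then psiExt ψ ((j : ℤ) + 1) * rhoExt ρ (I - j) else 0)) := by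
    intro j hj
    rcases lt_trichotomy j I with h | h | h
    · rw [if_neg (by omega), if_neg (by omega), if_pos h]
      have : ((I : ℤ) - (j : ℤ)).natAbs = I - j := by omega
      rw [this]; ring
    · subst h
      have h0 : ((j : ℤ) - (j : ℤ)).natAbs = 0 := by omega
      simp [h0, rhoExt]
    · rw [if_neg (by omega), if_pos h, if_neg (by omega)]
      have : ((I : ℤ) - (j : ℤ)).natAbs = j - I := by omega
      rw [this]; ring
  rw [Finset.sum_congr rfl hterm, Finset.sum_add_distrib, Finset.sum_add_distrib,
    Finset.sum_ite_eq' (Finset.range L) I, if_pos (Finset.mem_range.mpr hI)]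
  have h2 : ∑ j ∈ Finset.range L,
      (if I < j then psiExt ψ ((j : ℤ) + 1) * rhoExt ρ (j - I) else 0)
      = ∑ k ∈ Finset.range L, psiExt ψ ((I : ℤ) + (k : ℤ) + 2) * rhoExt ρ (k + 1) := by
    rw [← Finset.sum_filter]
    have hf : (Finset.range L).filter (fun j => I < j) = Finset.Ico (I + 1) L := by
      ext x; simp [Finset.mem_filter, Finset.mem_Ico]; omega
    rw [hf, Finset.sum_Ico_eq_sum_range]
    have : ∀ k ∈ Finset.range (L - (I + 1)),
        psiExt ψ (((I + 1 + k : ℕ) : ℤ) + 1) * rhoExt ρ (I + 1 + k - I)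
          = psiExt ψ ((I : ℤ) + (k : ℤ) + 2) * rhoExt ρ (k + 1) := by
      intro k hk
      congr 1
      · congr 1; push_cast; ring
      · congr 1; omega
    rw [Finset.sum_congr rfl this]
    apply Finset.sum_subset (by intro x hx; simp at hx ⊢; omega)
    intro k hk hk'
    simp only [Finset.mem_range] at hk hk'
    rw [psiExt_zero_of_gt ψ _ (by push_cast; omega), zero_mul]
  have h3 : ∑ j ∈ Finset.range L,
      (if j < I then psiExt ψ ((j : ℤ) + 1) * rhoExt ρ (I - j) else 0)
      = ∑ k ∈ Finset.range L, psiExt ψ ((I : ℤ) - (k : ℤ)) * rhoExt ρ (k + 1) := by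
    rw [← Finset.sum_filter]
    have hf : (Finset.range L).filter (fun j => j < I) = Finset.range I := by
      ext x; simp [Finset.mem_filter]; omega
    rw [hf, ← Finset.sum_range_reflect]
    have : ∀ k ∈ Finset.range I,
        psiExt ψ (((I - 1 - k : ℕ) : ℤ) + 1) * rhoExt ρ (I - (I - 1 - k))
          = psiExt ψ ((I : ℤ) - (k : ℤ)) * rhoExt ρ (k + 1) := by
      intro k hk
      simp only [Finset.mem_range] at hk
      congr 1
      · congr 1; omega
      · congr 1; omega
    rw [Finset.sum_congr rfl this]
    apply Finset.sum_subset (by intro x hx; simp at hx ⊢; omega)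
    intro k hk hk'
    simp only [Finset.mem_range] at hk hk'
    rw [psiExt_zero_of_nonpos ψ _ (by omega), zero_mul]
  rw [h2, h3]
  have : ∀ k ∈ Finset.range L,
      (psiExt ψ ((I : ℤ) + (k : ℤ) + 2) + psiExt ψ ((I : ℤ) - (k : ℤ))) * rhoExt ρ (k + 1)
        = psiExt ψ ((I : ℤ) + (k : ℤ) + 2) * rhoExt ρ (k + 1)
          + psiExt ψ ((I : ℤ) - (k : ℤ)) * rhoExt ρ (k + 1) := fun k _ => add_mul _ _ _
  rw [Finset.sum_congr rfl this, Finset.sum_add_distrib]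

/-- reformulation of the Yule–Walker equations.
`P ψ = -ρ` holds if and only if `(I + Φ) ρ = -ψ`; consequently, if `I + Φ` is
invertible and the Yule–Walker equation `P ψ = -ρ` holds, then
`ρ = -(I + Φ)⁻¹ ψ`. -/
theorem yuleWalker_reformulation (L : ℕ) (hL : 1 ≤ L) (ψ ρ : Fin L → ℝ) :
    (corrMatrix ρ *ᵥ ψ = -ρ ↔ (1 + phiMatrix ψ) *ᵥ ρ = -ψ) ∧
      (IsUnit (1 + phiMatrix ψ) → corrMatrix ρ *ᵥ ψ = -ρ →
        ρ = -((1 + phiMatrix ψ)⁻¹ *ᵥ ψ)) := by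
  have main : ∀ i : Fin L,
      (corrMatrix ρ *ᵥ ψ) i + ρ i = ((1 + phiMatrix ψ) *ᵥ ρ) i + ψ i := by
    intro i
    have hP : (corrMatrix ρ *ᵥ ψ) i
        = ∑ j ∈ Finset.range L, rhoExt ρ (((i : ℤ) - (j : ℤ)).natAbs) * psiExt ψ ((j : ℤ) + 1) := by
      rw [Matrix.mulVec, dotProduct, ← Fin.sum_univ_eq_sum_range
        (fun j => rhoExt ρ (((i : ℤ) - (j : ℤ)).natAbs) * psiExt ψ ((j : ℤ) + 1))]
      refine Finset.sum_congr rfl fun j _ => ?_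
      simp only [corrMatrix, psiExt_fin]
    have hPhi : ((1 + phiMatrix ψ) *ᵥ ρ) i
        = ρ i + ∑ k ∈ Finset.range L,
            (psiExt ψ ((i : ℤ) + (k : ℤ) + 2) + psiExt ψ ((i : ℤ) - (k : ℤ))) *
              rhoExt ρ (k + 1) := by
      rw [Matrix.mulVec, dotProduct]
      have : ∀ j : Fin L, (1 + phiMatrix ψ) i j * ρ j
          = (if i = j then ρ j else 0) + phiMatrix ψ i j * ρ j := by
        intro j
        rw [Matrix.add_apply, Matrix.one_apply, add_mul]
        by_cases h : i = j <;> simp [h]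
      rw [Finset.sum_congr rfl fun j _ => this j, Finset.sum_add_distrib,
        Finset.sum_ite_eq, if_pos (Finset.mem_univ i)]
      congr 1
      rw [← Fin.sum_univ_eq_sum_range
        (fun k => (psiExt ψ ((i : ℤ) + (k : ℤ) + 2) + psiExt ψ ((i : ℤ) - (k : ℤ))) *
          rhoExt ρ (k + 1))]
      refine Finset.sum_congr rfl fun k _ => ?_
      have e1 : ((i : ℤ) + 1) + ((k : ℤ) + 1) = (i : ℤ) + (k : ℤ) + 2 := by ring
      have e2 : ((i : ℤ) + 1) - ((k : ℤ) + 1) = (i : ℤ) - (k : ℤ) := by ring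
      simp only [rhoExt_fin, phiMatrix, e1, e2]
    rw [hP, hPhi, yw_key L i i.isLt ψ ρ, psiExt_fin]
    ring
  have hiff : corrMatrix ρ *ᵥ ψ = -ρ ↔ (1 + phiMatrix ψ) *ᵥ ρ = -ψ := by
    constructor
    · intro h
      funext i
      have h1 := congrFun h i
      have h2 := main i
      simp only [Pi.neg_apply] at h1 ⊢
      linarith
    · intro h
      funext i
      have h1 := congrFun h i
      have h2 := main i
      simp only [Pi.neg_apply] at h1 ⊢
      linarith
  refine ⟨hiff, fun hU h => ?_⟩
  have h2 := hiff.mp h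
  have hdet : IsUnit (1 + phiMatrix ψ).det := (Matrix.isUnit_iff_isUnit_det _).mp hU
  have := congrArg (fun v => (1 + phiMatrix ψ)⁻¹ *ᵥ v) h2
  simpa [Matrix.mulVec_mulVec, Matrix.nonsing_inv_mul _ hdet, Matrix.mulVec_neg] using this
end
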